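/- arXiv:math/0404042 — 3 statements merged into one kernel-verified Lean document; each statement's English description precedes it below -/
import Mathlib

section
/- For all $x \in [0,1]$ and all real $\lambda \geq 1$, $\frac{1 - x^{\lambda}}{1 + x^{\lambda}} \leq \lambda \cdot \frac{1 - x}{1 + x}$. -/
/-!
Clearing denominators, the claim says that
`f y = λ (1 - y) (1 + y ^ λ) - (1 - y ^ λ) (1 + y)` is nonnegative at `y = x`.
Since `f 1 = 0`, it suffices that `f` is antitone on `[0, 1]`, and indeed
`f' y = (λ + 1) (λ y ^ (λ - 1) - (λ - 1) y ^ λ - 1) ≤ 0`: this says that the tangent line of the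
convex function `z ↦ z ^ λ` at `y` lies below its graph at `z = 1`, which is Bernoulli's
inequality `(1 + s) ^ λ ≥ 1 + λ s` for `s = y⁻¹ - 1`.
-/

open Real Set

lemma mul_rpow_sub_one_sub_mul_rpow_le_one {p y : ℝ} (hp : 1 ≤ p) (hy : 0 < y) :
    p * y ^ (p - 1) - (p - 1) * y ^ p ≤ 1 := by
  have hbernoulli : 1 + p * (y⁻¹ - 1) ≤ (y ^ p)⁻¹ := by
    simpa [inv_rpow hy.le] using
      one_add_mul_self_le_rpow_one_add (s := y⁻¹ - 1) (by linarith [inv_pos.mpr hy]) hp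
  have hypos : 0 < y ^ p := rpow_pos_of_pos hy p
  calc p * y ^ (p - 1) - (p - 1) * y ^ p
      = (1 + p * (y⁻¹ - 1)) * y ^ p := by rw [rpow_sub_one hy.ne']; field_simp; ring
    _ ≤ (y ^ p)⁻¹ * y ^ p := by gcongr
    _ = 1 := inv_mul_cancel₀ hypos.ne'

lemma hasDerivAt_mul_one_sub_mul_one_add_rpow_sub {p y : ℝ} (hy : 0 < y) :
    HasDerivAt (fun z => p * (1 - z) * (1 + z ^ p) - (1 - z ^ p) * (1 + z))
      ((p + 1) * (p * y ^ (p - 1) - (p - 1) * y ^ p - 1)) y := by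
  have hpow : HasDerivAt (fun z => z ^ p) (p * y ^ (p - 1)) y :=
    hasDerivAt_rpow_const (Or.inl hy.ne')
  refine ((((hasDerivAt_id y).const_sub 1).const_mul p |>.mul (hpow.const_add 1)).sub
    ((hpow.const_sub 1).mul ((hasDerivAt_id y).const_add 1))).congr_deriv ?_
  rw [id, rpow_sub_one hy.ne']
  field_simp
  ring

lemma one_sub_rpow_mul_one_add_le {p x : ℝ} (hp : 1 ≤ p) (hx0 : 0 ≤ x) (hx1 : x ≤ 1) :
    (1 - x ^ p) * (1 + x) ≤ p * (1 - x) * (1 + x ^ p) := by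
  set f : ℝ → ℝ := fun z => p * (1 - z) * (1 + z ^ p) - (1 - z ^ p) * (1 + z)
  have hcont : ContinuousOn f (Icc 0 1) := by
    have hpow : Continuous fun z : ℝ => z ^ p := continuous_rpow_const (by linarith)
    exact (by fun_prop : Continuous f).continuousOn
  have hanti : AntitoneOn f (Icc 0 1) := by
    refine antitoneOn_of_hasDerivWithinAt_nonpos (convex_Icc 0 1) hcont
      (f' := fun y => (p + 1) * (p * y ^ (p - 1) - (p - 1) * y ^ p - 1))
      (fun y hy => ?_) (fun y hy => ?_)
    all_goals rw [interior_Icc] at hy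
    · exact (hasDerivAt_mul_one_sub_mul_one_add_rpow_sub hy.1).hasDerivWithinAt
    · exact mul_nonpos_of_nonneg_of_nonpos (by linarith)
        (by linarith [mul_rpow_sub_one_sub_mul_rpow_le_one hp hy.1])
  have hf1 : f 1 = 0 := by simp [f]
  have hfx : f 1 ≤ f x := hanti ⟨hx0, hx1⟩ ⟨zero_le_one, le_rfl⟩ hx1
  simp only [f, hf1] at hfx
  linarith

theorem stmt_9 (x : ℝ) (hx0 : 0 ≤ x) (hx1 : x ≤ 1) (lam : ℝ) (hlam : 1 ≤ lam) :
    (1 - x ^ lam) / (1 + x ^ lam) ≤ lam * ((1 - x) / (1 + x)) := by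
  have hxlam : 0 ≤ x ^ lam := rpow_nonneg hx0 lam
  rw [mul_div_assoc', div_le_div_iff₀ (by linarith) (by linarith)]
  exact one_sub_rpow_mul_one_add_le hlam hx0 hx1
end

section
/- Let $\unlhd$ be a partial order on $\mathbb{R}^n$ such that for every $w$ the set $\{z : z \unlhd w\}$ is convex, let $\mu$ be a probability measure supported on a bounded subset of $\mathbb{R}^n$ that is totally ordered by $\unlhd$, and let $h : \mathbb{R}^n \to \mathbb{R}$ be continuous and convex along every segment connecting two comparable points. Then $h(\int x\, d\mu(x)) \leq \int h(x)\, d\mu(x)$. -/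
/-!
On a finite chain, Jensen's inequality follows by induction: remove the top element `m`; since
`{z | r z m}` is convex, the barycenter `b` of the remaining points lies below `m`, and convexity
of `h` on the segment `[b, m]` combines the induction hypothesis with the weight of `m`.
For a general measure carried by a bounded chain, compose with the simple approximations
`SimpleFunc.approxOn id` of the identity, whose values stay in the chain; both sides of the
inequality converge by dominated convergence, as `h` is bounded on the compact closure.
-/

open MeasureTheory Filter Topology Finset

section ChainJensen

theorem Finset.exists_mem_forall_rel_of_isChain {α : Type*} {r : α → α → Prop} [IsTrans α r]
    [Std.Refl r] {t : Finset α} (ht : IsChain r (t : Set α)) (hne : t.Nonempty) :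
    ∃ m ∈ t, ∀ y ∈ t, r y m := by
  have : Nonempty t := hne.to_subtype
  obtain ⟨m, hm⟩ := (directedOn_iff_directed.1 ht.directedOn).finset_le Finset.univ
  exact ⟨m, m.2, fun y hy => hm ⟨y, hy⟩ (Finset.mem_univ _)⟩

variable {E : Type*} [AddCommGroup E] [Module ℝ E] {r : E → E → Prop} [IsTrans E r] [Std.Refl r]
  {h : E → ℝ}

theorem map_centerMass_le_of_isChain (hlower : ∀ w, Convex ℝ {z | r z w})
    (hconv : ∀ z w, r z w → ConvexOn ℝ (segment ℝ z w) h) {w : E → ℝ} {t : Finset E}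
    (ht : IsChain r (t : Set E)) (hw : ∀ y ∈ t, 0 < w y) (hne : t.Nonempty) :
    h (t.centerMass w id) ≤ t.centerMass w h := by
  classical
  induction t using Finset.strongInduction with
  | H t ih =>
    obtain ⟨m, hmt, hm⟩ := t.exists_mem_forall_rel_of_isChain ht hne
    set t' := t.erase m
    rcases t'.eq_empty_or_nonempty with ht' | ht'
    · obtain rfl : t = {m} := ((erase_eq_empty_iff t m).1 ht').resolve_left hne.ne_empty
      have hm0 := (hw m hmt).ne'
      simp only [centerMass_singleton _ _ hm0, id, le_refl]
    set c := ∑ y ∈ t', w y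
    have hc : 0 < c := Finset.sum_pos (fun y hy => hw y (mem_of_mem_erase hy)) ht'
    set b := t'.centerMass w id
    have hbm : r b m := (hlower m).centerMass_mem (fun y hy => (hw y (mem_of_mem_erase hy)).le) hc
      fun y hy => hm y (mem_of_mem_erase hy)
    have hb : h b ≤ t'.centerMass w h := ih t' (erase_ssubset hmt) (ht.mono (by simp [t']))
      (fun y hy => hw y (mem_of_mem_erase hy)) ht'
    have hW : 0 < w m + c := add_pos (hw m hmt) hc
    rw [← Finset.insert_erase hmt, centerMass_insert _ _ _ (notMem_erase m t) hc.ne',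
      centerMass_insert _ _ _ (notMem_erase m t) hc.ne']
    calc h ((w m / (w m + c)) • m + (c / (w m + c)) • b)
        ≤ (w m / (w m + c)) • h m + (c / (w m + c)) • h b :=
          (hconv b m hbm).2 (right_mem_segment ℝ b m) (left_mem_segment ℝ b m)
            (div_nonneg (hw m hmt).le hW.le) (div_nonneg hc.le hW.le) (by field_simp)
      _ ≤ _ := by gcongr

theorem map_sum_le_of_isChain (hlower : ∀ w, Convex ℝ {z | r z w})
    (hconv : ∀ z w, r z w → ConvexOn ℝ (segment ℝ z w) h) {t : Finset E}
    (ht : IsChain r (t : Set E)) {w : E → ℝ} (hw₀ : ∀ y ∈ t, 0 ≤ w y) (hw₁ : ∑ y ∈ t, w y = 1) :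
    h (∑ y ∈ t, w y • y) ≤ ∑ y ∈ t, w y • h y := by
  classical
  have hne : {y ∈ t | w y ≠ 0}.Nonempty := by
    obtain ⟨y, hy, hwy⟩ := exists_ne_zero_of_sum_ne_zero (hw₁.trans_ne one_ne_zero)
    exact ⟨y, mem_filter.2 ⟨hy, hwy⟩⟩
  have key := map_centerMass_le_of_isChain hlower hconv
    (ht.mono (coe_subset.2 (filter_subset _ t)))
    (fun y hy => (hw₀ y (mem_filter.1 hy).1).lt_of_ne' (mem_filter.1 hy).2) hne
  rwa [centerMass_filter_ne_zero, centerMass_filter_ne_zero, centerMass_eq_of_sum_1 _ _ hw₁,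
    centerMass_eq_of_sum_1 _ _ hw₁] at key

end ChainJensen

namespace MeasureTheory.SimpleFunc

variable {α E F : Type*} [MeasurableSpace α] {μ : Measure α}
  [NormedAddCommGroup F] [NormedSpace ℝ F] [CompleteSpace F]

theorem sum_range_measureReal_preimage_singleton [IsFiniteMeasure μ] (ψ : SimpleFunc α E) :
    ∑ y ∈ ψ.range, μ.real (ψ ⁻¹' {y}) = μ.real Set.univ := by
  rw [sum_measureReal_preimage_singleton _ fun y _ => ψ.measurableSet_fiber y,
    SimpleFunc.coe_range, Set.preimage_range]

theorem integral_comp_eq_sum [NormedAddCommGroup E] [IsFiniteMeasure μ] (ψ : SimpleFunc α E)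
    (g : E → F) : ∫ x, g (ψ x) ∂μ = ∑ y ∈ ψ.range, μ.real (ψ ⁻¹' {y}) • g y := by
  -- `map_integral` needs a function vanishing at `0`, so shift `g` by the constant `g 0`.
  have hshift := ψ.map_integral (fun y => g y - g 0) (ψ.integrable_of_isFiniteMeasure (μ := μ))
    (sub_self _)
  have hint : Integrable (fun x => g (ψ x)) μ := (ψ.map g).integrable_of_isFiniteMeasure
  rw [integral_eq_integral _ (integrable_of_isFiniteMeasure _)] at hshift
  simp only [coe_map, Function.comp_apply] at hshift
  rw [MeasureTheory.integral_sub hint (integrable_const _), MeasureTheory.integral_const] at hshift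
  simp only [smul_sub, sum_sub_distrib, ← sum_smul,
    ψ.sum_range_measureReal_preimage_singleton] at hshift
  exact sub_left_injective hshift

theorem map_integral_le_of_isChain [NormedAddCommGroup E] [NormedSpace ℝ E] [CompleteSpace E]
    [IsProbabilityMeasure μ] {r : E → E → Prop} [IsTrans E r] [Std.Refl r] {h : E → ℝ}
    (hlower : ∀ w, Convex ℝ {z | r z w}) (hconv : ∀ z w, r z w → ConvexOn ℝ (segment ℝ z w) h)
    {s : Set E} (hs : IsChain r s) (ψ : SimpleFunc α E) (hψ : ∀ x, ψ x ∈ s) :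
    h (∫ x, ψ x ∂μ) ≤ ∫ x, h (ψ x) ∂μ := by
  rw [integral_eq_sum _ (integrable_of_isFiniteMeasure _), integral_comp_eq_sum]
  refine map_sum_le_of_isChain hlower hconv (hs.mono ?_) (fun _ _ => measureReal_nonneg) ?_
  · simpa [Set.subset_def] using hψ
  · rw [sum_range_measureReal_preimage_singleton, probReal_univ]

end MeasureTheory.SimpleFunc

section Approximation

variable {E F : Type*} [PseudoMetricSpace E] [ProperSpace E] [MeasurableSpace E]
  [OpensMeasurableSpace E] [NormedAddCommGroup F] [NormedSpace ℝ F]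

theorem tendsto_integral_comp_approxOn {μ : Measure E} [IsFiniteMeasure μ] {s : Set E}
    (hs : Bornology.IsBounded s) {y₀ : E} (hy₀ : y₀ ∈ s) (hμ : ∀ᵐ x ∂μ, x ∈ closure s)
    {g : E → F} (hg : Continuous g) :
    Tendsto (fun N => ∫ x, g (SimpleFunc.approxOn id measurable_id s y₀ hy₀ N x) ∂μ) atTop
      (𝓝 (∫ x, g x ∂μ)) := by
  obtain ⟨C, hC⟩ : ∃ C, ∀ x ∈ closure s, ‖g x‖ ≤ C :=
    hs.isCompact_closure.exists_bound_of_continuousOn hg.continuousOn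
  refine tendsto_integral_of_dominated_convergence (fun _ => C)
    (fun N => ((SimpleFunc.approxOn id measurable_id s y₀ hy₀ N).map g).aestronglyMeasurable)
    (integrable_const C)
    (fun N => .of_forall fun x => hC _ (subset_closure (SimpleFunc.approxOn_mem _ _ _ _))) ?_
  filter_upwards [hμ] with x hx
  exact (hg.tendsto x).comp (SimpleFunc.tendsto_approxOn measurable_id hy₀ hx)

end Approximation

theorem stmt_14_general {n : ℕ}
    (r : (Fin n → ℝ) → (Fin n → ℝ) → Prop)
    (hrefl : ∀ z, r z z)
    (htrans : ∀ z w v, r z w → r w v → r z v)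
    (hlower : ∀ w, Convex ℝ {z | r z w})
    (μ : Measure (Fin n → ℝ)) [IsProbabilityMeasure μ]
    (s : Set (Fin n → ℝ)) (hbdd : Bornology.IsBounded s) (hμs : μ s = 1)
    (hchain : ∀ z ∈ s, ∀ w ∈ s, r z w ∨ r w z)
    (h : (Fin n → ℝ) → ℝ) (hcont : Continuous h)
    (hconv : ∀ z w, r z w → ConvexOn ℝ (segment ℝ z w) h) :
    h (∫ x, x ∂μ) ≤ ∫ x, h x ∂μ := by
  have : IsTrans _ r := ⟨htrans⟩
  have : Std.Refl r := ⟨hrefl⟩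
  obtain ⟨y₀, hy₀⟩ : s.Nonempty := nonempty_of_measure_ne_zero (μ := μ) (by simp [hμs])
  have hμ : ∀ᵐ x ∂μ, x ∈ closure s := (prob_compl_eq_zero_iff isClosed_closure.measurableSet).2
    (le_antisymm prob_le_one (hμs ▸ measure_mono subset_closure))
  refine le_of_tendsto_of_tendsto' ((hcont.tendsto _).comp
    (tendsto_integral_comp_approxOn hbdd hy₀ hμ continuous_id))
    (tendsto_integral_comp_approxOn hbdd hy₀ hμ hcont) fun N => ?_
  exact SimpleFunc.map_integral_le_of_isChain hlower hconv
    (fun z hz w hw _ => hchain z hz w hw) _ (SimpleFunc.approxOn_mem measurable_id hy₀ N)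

/-- A generalized Jensen inequality: if `h` is continuous and convex along every
segment joining two points comparable in a partial order `r` with convex lower
sets, and `μ` is a probability measure supported on a bounded `r`-chain, then
`h(∫ x dμ) ≤ ∫ h dμ`. -/
theorem stmt_14 {n : ℕ}
    (r : (Fin n → ℝ) → (Fin n → ℝ) → Prop)
    (hrefl : ∀ z, r z z)
    (hantisymm : ∀ z w, r z w → r w z → z = w)
    (htrans : ∀ z w v, r z w → r w v → r z v)
    (hlower : ∀ w, Convex ℝ {z | r z w})
    (μ : Measure (Fin n → ℝ)) [IsProbabilityMeasure μ]
    (s : Set (Fin n → ℝ)) (hbdd : Bornology.IsBounded s) (hμs : μ s = 1)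
    (hchain : ∀ z ∈ s, ∀ w ∈ s, r z w ∨ r w z)
    (h : (Fin n → ℝ) → ℝ) (hcont : Continuous h)
    (hconv : ∀ z w, r z w → ConvexOn ℝ (segment ℝ z w) h) :
    h (∫ x, x ∂μ) ≤ ∫ x, h x ∂μ :=
  stmt_14_general r hrefl htrans hlower μ s hbdd hμs hchain h hcont hconv
end

section
/- Let $\Gamma$ be a spherically symmetric tree of finite height $n$ and define $h_\Gamma(z_1,\ldots,z_n)$ for $1 \geq z_1 \geq \cdots \geq z_n \geq 0$ recursively by $h_\Gamma(z_1) = (1-z_1)^{|\Gamma_1|}$ and $h_\Gamma(z_1,\ldots,z_n) = [(1-z_1) + z_1 h_{\Gamma(\sigma)}(z_2/z_1,\ldots,z_n/z_1)]^{|\Gamma_1|}$ where $\Gamma(\sigma)$ is the subtree rooted at any first-level vertex. Then $h_\Gamma$ is a convex function on its domain. -/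
/-!
Peeling off the root, `h_{n+1}(z) = φ(z) ^ f 0` with `φ(z) = 1 - z₀ + z₀ · h_n(z₁/z₀, z₂/z₀, …)`.
The second summand of `φ` is the perspective `z ↦ z₀ · g(z'/z₀)` of the convex function `g = h_n`,
and perspectives of convex functions are convex; so `φ` is convex, and as it takes values in
`[0, 1]`, so is its power. On the face `z₀ = 0` of the domain all coordinates vanish and the
perspective is `0`, which is what makes the argument go through at the boundary.
-/

/-- The probability that no ray of a spherically symmetric tree of height `n` with
branching numbers `f 0, …, f (n-1)` survives the Bernoulli percolation in which a
level-`(k+1)` vertex is connected to the root with probability `z k`. -/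
noncomputable def hG : ℕ → (ℕ → ℕ) → (ℕ → ℝ) → ℝ
  | 0, _, _ => 0
  | n + 1, f, z =>
      ((1 - z 0) + z 0 * hG n (fun k => f (k + 1)) (fun k => z (k + 1) / z 0)) ^ (f 0)

open Set

/-- `z k` is the paper's `z_{k+1}`; the order simplex `1 ≥ z₁ ≥ ⋯ ≥ zₙ ≥ 0`. -/
def orderSimplex (n : ℕ) : Set (ℕ → ℝ) :=
  {z | (∀ k < n, z k ∈ Icc 0 1) ∧ ∀ k, k + 1 < n → z (k + 1) ≤ z k}

/-- For `z 0 = 0` this is `0` (division by zero), harmless since the perspective then vanishes. -/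
noncomputable def rescale (z : ℕ → ℝ) : ℕ → ℝ := fun k => z (k + 1) / z 0

noncomputable def perspective (g : (ℕ → ℝ) → ℝ) (z : ℕ → ℝ) : ℝ := z 0 * g (rescale z)

lemma apply_le_apply_zero_of_chain {n : ℕ} {z : ℕ → ℝ}
    (h : ∀ k, k + 1 < n → z (k + 1) ≤ z k) : ∀ {k}, k < n → z k ≤ z 0
  | 0, _ => le_rfl
  | k + 1, hk => (h k hk).trans (apply_le_apply_zero_of_chain h (by omega))

section orderSimplex

variable {n : ℕ} {z : ℕ → ℝ}

lemma convex_orderSimplex (n : ℕ) : Convex ℝ (orderSimplex n) := by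
  rintro x ⟨hxI, hx⟩ y ⟨hyI, hy⟩ a b ha hb hab
  refine ⟨fun k hk => ?_, fun k hk => ?_⟩ <;> simp only [Pi.add_apply, Pi.smul_apply, smul_eq_mul]
  · exact (convex_Icc (0 : ℝ) 1) (hxI k hk) (hyI k hk) ha hb hab
  · exact add_le_add (mul_le_mul_of_nonneg_left (hx k hk) ha)
      (mul_le_mul_of_nonneg_left (hy k hk) hb)

lemma apply_eq_zero_of_mem_orderSimplex (hz : z ∈ orderSimplex n) (h0 : z 0 = 0) {k : ℕ}
    (hk : k < n) : z k = 0 :=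
  le_antisymm (h0 ▸ apply_le_apply_zero_of_chain hz.2 hk) (hz.1 k hk).1

lemma rescale_mem_orderSimplex (hz : z ∈ orderSimplex (n + 1)) : rescale z ∈ orderSimplex n := by
  have hz0 : 0 ≤ z 0 := (hz.1 0 n.succ_pos).1
  refine ⟨fun k hk => ⟨div_nonneg (hz.1 (k + 1) (by omega)).1 hz0, ?_⟩, fun k hk => ?_⟩
  · exact div_le_one_of_le₀ (apply_le_apply_zero_of_chain hz.2 (by omega)) hz0
  · exact div_le_div_of_nonneg_right (hz.2 (k + 1) (by omega)) hz0

end orderSimplex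

lemma rescale_smul {c : ℝ} (hc : c ≠ 0) (z : ℕ → ℝ) : rescale (c • z) = rescale z := by
  funext k
  simp only [rescale, Pi.smul_apply, smul_eq_mul, mul_div_mul_left _ _ hc]

lemma rescale_convex_combination {x y : ℕ → ℝ} (a b : ℝ) (hx : x 0 ≠ 0) (hy : y 0 ≠ 0)
    (hw : a * x 0 + b * y 0 ≠ 0) :
    rescale (a • x + b • y) =
      (a * x 0 / (a * x 0 + b * y 0)) • rescale x + (b * y 0 / (a * x 0 + b * y 0)) • rescale y := by
  funext k
  simp only [rescale, Pi.add_apply, Pi.smul_apply, smul_eq_mul]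
  field_simp

section perspective

variable {n : ℕ} {g : (ℕ → ℝ) → ℝ}

lemma perspective_smul (c : ℝ) (z : ℕ → ℝ) : perspective g (c • z) = c * perspective g z := by
  rcases eq_or_ne c 0 with rfl | hc
  · simp [perspective]
  · simp only [perspective, rescale_smul hc, Pi.smul_apply, smul_eq_mul, mul_assoc]

lemma perspective_congr (hg : ∀ z w, (∀ k < n, z k = w k) → g z = g w) {z w : ℕ → ℝ}
    (h : ∀ k < n + 1, z k = w k) : perspective g z = perspective g w := by
  have h0 : z 0 = w 0 := h 0 n.succ_pos
  refine congrArg₂ (· * ·) h0 (hg _ _ fun k hk => ?_)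
  simp only [rescale, h0, h (k + 1) (by omega)]

lemma perspective_add_of_eqOn_zero (hg : ∀ z w, (∀ k < n, z k = w k) → g z = g w)
    {x y : ℕ → ℝ} (hx : ∀ k < n + 1, x k = 0) : perspective g (x + y) = perspective g y :=
  perspective_congr hg fun k hk => by simp [hx k hk]

theorem convexOn_perspective (hconv : ConvexOn ℝ (orderSimplex n) g)
    (hg : ∀ z w, (∀ k < n, z k = w k) → g z = g w) :
    ConvexOn ℝ (orderSimplex (n + 1)) (perspective g) := by
  refine ⟨convex_orderSimplex _, fun x hx y hy a b ha hb hab => ?_⟩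
  have hx0 : 0 ≤ x 0 := (hx.1 0 n.succ_pos).1
  have hy0 : 0 ≤ y 0 := (hy.1 0 n.succ_pos).1
  simp only [smul_eq_mul]
  rcases hx0.eq_or_lt with hx0 | hx0
  · have hax : ∀ k < n + 1, (a • x) k = 0 := fun k hk => by
      simp [apply_eq_zero_of_mem_orderSimplex hx hx0.symm hk]
    have hPx : perspective g x = 0 := by rw [perspective, ← hx0, zero_mul]
    rw [perspective_add_of_eqOn_zero hg hax, perspective_smul, hPx, mul_zero, zero_add]
  rcases hy0.eq_or_lt with hy0 | hy0
  · have hby : ∀ k < n + 1, (b • y) k = 0 := fun k hk => by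
      simp [apply_eq_zero_of_mem_orderSimplex hy hy0.symm hk]
    have hPy : perspective g y = 0 := by rw [perspective, ← hy0, zero_mul]
    rw [add_comm, perspective_add_of_eqOn_zero hg hby, perspective_smul, hPy, mul_zero, add_zero]
  set w0 := a * x 0 + b * y 0
  have hw0 : 0 < w0 := by
    rcases ha.eq_or_lt with rfl | ha
    · have hb1 : b = 1 := by linarith
      simpa [w0, hb1] using hy0
    · positivity
  have hcd : a * x 0 / w0 + b * y 0 / w0 = 1 := by rw [← add_div, div_self hw0.ne']
  calc perspective g (a • x + b • y)
      = w0 * g ((a * x 0 / w0) • rescale x + (b * y 0 / w0) • rescale y) := by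
        rw [perspective, rescale_convex_combination a b hx0.ne' hy0.ne' hw0.ne']
        simp [w0]
    _ ≤ w0 * ((a * x 0 / w0) * g (rescale x) + (b * y 0 / w0) * g (rescale y)) := by
        gcongr
        exact hconv.2 (rescale_mem_orderSimplex hx) (rescale_mem_orderSimplex hy)
          (by positivity) (by positivity) hcd
    _ = a * perspective g x + b * perspective g y := by
        simp only [perspective]
        field_simp

end perspective

lemma hG_succ (n : ℕ) (f : ℕ → ℕ) :
    hG (n + 1) f = (fun z => 1 - z 0 + perspective (hG n fun k => f (k + 1)) z) ^ f 0 :=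
  rfl

lemma hG_congr : ∀ (n : ℕ) (f : ℕ → ℕ) (z w : ℕ → ℝ), (∀ k < n, z k = w k) → hG n f z = hG n f w
  | 0, _, _, _, _ => rfl
  | n + 1, f, z, w, h => by
    rw [hG_succ, Pi.pow_apply, Pi.pow_apply, h 0 n.succ_pos,
      perspective_congr (hG_congr n _) h]

lemma one_sub_add_mul_mem_Icc {t h : ℝ} (ht : t ∈ Icc (0 : ℝ) 1) (hh : h ∈ Icc (0 : ℝ) 1) :
    1 - t + t * h ∈ Icc (0 : ℝ) 1 := by
  obtain ⟨ht0, ht1⟩ := ht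
  obtain ⟨hh0, hh1⟩ := hh
  constructor <;> nlinarith

lemma hG_mem_Icc : ∀ (n : ℕ) (f : ℕ → ℕ) {z : ℕ → ℝ}, z ∈ orderSimplex n → hG n f z ∈ Icc 0 1
  | 0, _, _, _ => by simp [hG]
  | n + 1, f, z, hz => by
    have hb := one_sub_add_mul_mem_Icc (hz.1 0 n.succ_pos)
      (hG_mem_Icc n (fun k => f (k + 1)) (rescale_mem_orderSimplex hz))
    exact ⟨pow_nonneg hb.1 _, pow_le_one₀ hb.1 hb.2⟩

theorem convexOn_hG : ∀ (n : ℕ) (f : ℕ → ℕ), ConvexOn ℝ (orderSimplex n) (hG n f)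
  | 0, _ => convexOn_const 0 (convex_orderSimplex 0)
  | n + 1, f => by
    have hP := convexOn_perspective (convexOn_hG n fun k => f (k + 1)) (hG_congr n _)
    have hφ : ConvexOn ℝ (orderSimplex (n + 1))
        (fun z => 1 - z 0 + perspective (hG n fun k => f (k + 1)) z) := by
      refine ⟨convex_orderSimplex _, fun x hx y hy a b ha hb hab => ?_⟩
      have := hP.2 hx hy ha hb hab
      simp only [Pi.add_apply, Pi.smul_apply, smul_eq_mul] at this ⊢
      linear_combination this - hab
    rw [hG_succ]
    refine hφ.pow (fun z hz => ?_) _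
    exact (one_sub_add_mul_mem_Icc (hz.1 0 n.succ_pos)
      (hG_mem_Icc n _ (rescale_mem_orderSimplex hz))).1

theorem stmt_15_general (n : ℕ) (hn : 1 ≤ n) (f : ℕ → ℕ) :
    ConvexOn ℝ
      {z : ℕ → ℝ | z 0 ≤ 1 ∧ (∀ k, k < n → 0 ≤ z k) ∧
        ∀ k, k + 1 < n → z (k + 1) ≤ z k}
      (hG n f) := by
  have hdom : {z : ℕ → ℝ | z 0 ≤ 1 ∧ (∀ k, k < n → 0 ≤ z k) ∧
      ∀ k, k + 1 < n → z (k + 1) ≤ z k} = orderSimplex n := by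
    ext z
    refine ⟨fun ⟨h1, h0, hchain⟩ => ⟨fun k hk => ?_, hchain⟩,
      fun ⟨hI, hchain⟩ => ⟨(hI 0 hn).2, fun k hk => (hI k hk).1, hchain⟩⟩
    exact ⟨h0 k hk, (apply_le_apply_zero_of_chain hchain hk).trans h1⟩
  rw [hdom]
  exact convexOn_hG n f

/-- For a spherically symmetric tree the non-percolation function `h_Γ` is convex on
the domain `1 ≥ z₁ ≥ ⋯ ≥ z_n ≥ 0`. -/
theorem stmt_15 (n : ℕ) (hn : 1 ≤ n) (f : ℕ → ℕ) (hf : ∀ k, 1 ≤ f k) :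
    ConvexOn ℝ
      {z : ℕ → ℝ | z 0 ≤ 1 ∧ (∀ k, k < n → 0 ≤ z k) ∧
        ∀ k, k + 1 < n → z (k + 1) ≤ z k}
      (hG n f) :=
  stmt_15_general n hn f
end
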